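/- Let p, q ∈ [1,∞), δ > 0, L ≥ 0, and let f : E → E satisfy ‖f(u)−f(w)‖ ≤ L‖u−w‖^{p/q} for all u, w ∈ E with ‖u−w‖ ≤ δ. Suppose also C_f maps ℓ^p(E) into bv_q(E). Then C_f is uniformly continuous: for every ε > 0 there exists η > 0 such that ‖C_f(x)−C_f(y)‖_{bv_q} ≤ ε whenever x, y ∈ ℓ^p(E) with ‖x−y‖_{ℓ^p} ≤ η. -/

import Mathlib

noncomputable def bvNorm {E : Type*} [NormedAddCommGroup E] (q : ℝ) (x : ℕ → E) : ℝ :=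
  ‖x 0‖ + (∑' n : ℕ, ‖x (n + 1) - x n‖ ^ q) ^ (1 / q)

noncomputable def lpNorm {E : Type*} [NormedAddCommGroup E] (p : ℝ) (x : ℕ → E) : ℝ :=
  (∑' n : ℕ, ‖x n‖ ^ p) ^ (1 / p)

/-!
Write `d = x - y` and `g = f ∘ x - f ∘ y`. A small `ℓ^p` norm of `d` makes every `‖d n‖` at most
`δ`, so the Hölder condition gives `‖g n‖ ^ q ≤ L ^ q ‖d n‖ ^ p` termwise, hence
`‖g‖_q ≤ L ‖d‖_p ^ (p / q)`. By Minkowski the `bv_q` norm of a sequence is at most three times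
its `ℓ^q` norm, so `‖g‖_{bv_q} ≤ 3 L ‖d‖_p ^ (p / q)`, which is small uniformly in `x` and `y`.
-/

open Real

section SequenceNorms

variable {E F : Type*} [NormedAddCommGroup E] [NormedAddCommGroup F]

lemma bvNorm_eq_norm_add_lpNorm (q : ℝ) (x : ℕ → E) :
    bvNorm q x = ‖x 0‖ + lpNorm q (fun n => x (n + 1) - x n) :=
  rfl

lemma lpNorm_nonneg (p : ℝ) (x : ℕ → E) : 0 ≤ lpNorm p x :=
  rpow_nonneg (tsum_nonneg fun _ => rpow_nonneg (norm_nonneg _) _) _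

lemma summable_norm_sub_rpow {p : ℝ} (hp : 0 < p) {x y : ℕ → E}
    (hx : Summable fun n => ‖x n‖ ^ p) (hy : Summable fun n => ‖y n‖ ^ p) :
    Summable fun n => ‖x n - y n‖ ^ p := by
  have hP : (ENNReal.ofReal p).toReal = p := ENNReal.toReal_ofReal hp.le
  have hmem (z : ℕ → E) : Memℓp z (ENNReal.ofReal p) ↔ Summable fun n => ‖z n‖ ^ p := by
    rw [memℓp_gen_iff (hP.symm ▸ hp), hP]
  exact (hmem _).1 (((hmem x).2 hx).sub ((hmem y).2 hy))

lemma norm_le_lpNorm {p : ℝ} (hp : 0 < p) {x : ℕ → E} (hx : Summable fun n => ‖x n‖ ^ p)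
    (n : ℕ) : ‖x n‖ ≤ lpNorm p x := by
  calc ‖x n‖ = (‖x n‖ ^ p) ^ (1 / p) := by
        rw [one_div, rpow_rpow_inv (norm_nonneg _) hp.ne']
    _ ≤ lpNorm p x := by
        unfold lpNorm
        gcongr
        exact hx.le_tsum n fun m _ => rpow_nonneg (norm_nonneg _) p

lemma lpNorm_comp_add_one_le {p : ℝ} (hp : 0 ≤ p) {x : ℕ → E}
    (hx : Summable fun n => ‖x n‖ ^ p) : lpNorm p (fun n => x (n + 1)) ≤ lpNorm p x := by
  refine rpow_le_rpow (tsum_nonneg fun _ => rpow_nonneg (norm_nonneg _) _) ?_ (by positivity)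
  rw [hx.tsum_eq_zero_add]
  exact le_add_of_nonneg_left (rpow_nonneg (norm_nonneg _) _)

lemma lpNorm_sub_le {p : ℝ} (hp : 1 ≤ p) {x y : ℕ → E}
    (hx : Summable fun n => ‖x n‖ ^ p) (hy : Summable fun n => ‖y n‖ ^ p) :
    lpNorm p (fun n => x n - y n) ≤ lpNorm p x + lpNorm p y := by
  have hp0 : 0 < p := zero_lt_one.trans_le hp
  obtain ⟨hsum, hminkowski⟩ := Lp_add_le_tsum_of_nonneg hp (fun n => norm_nonneg (x n))
    (fun n => norm_nonneg (y n)) hx hy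
  refine le_trans ?_ hminkowski
  unfold lpNorm
  gcongr
  · exact summable_norm_sub_rpow hp0 hx hy
  · exact norm_sub_le _ _

lemma bvNorm_le_three_mul_lpNorm {q : ℝ} (hq : 1 ≤ q) {x : ℕ → E}
    (hx : Summable fun n => ‖x n‖ ^ q) : bvNorm q x ≤ 3 * lpNorm q x := by
  have hq0 : 0 < q := zero_lt_one.trans_le hq
  have hshift : Summable fun n => ‖x (n + 1)‖ ^ q := (summable_nat_add_iff 1).2 hx
  rw [bvNorm_eq_norm_add_lpNorm]
  linarith [norm_le_lpNorm hq0 hx 0, lpNorm_sub_le hq hshift hx,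
    lpNorm_comp_add_one_le hq0.le hx]

lemma lpNorm_le_mul_lpNorm_rpow {p q L : ℝ} (hp : 0 < p) (hq : 0 < q) (hL : 0 ≤ L)
    {x : ℕ → F} {y : ℕ → E} (hy : Summable fun n => ‖y n‖ ^ p)
    (hxy : ∀ n, ‖x n‖ ≤ L * ‖y n‖ ^ (p / q)) :
    (Summable fun n => ‖x n‖ ^ q) ∧ lpNorm q x ≤ L * lpNorm p y ^ (p / q) := by
  have hpow : ∀ n, ‖x n‖ ^ q ≤ L ^ q * ‖y n‖ ^ p := fun n => by
    calc ‖x n‖ ^ q ≤ (L * ‖y n‖ ^ (p / q)) ^ q := by gcongr; exact hxy n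
      _ = L ^ q * ‖y n‖ ^ p := by
        rw [mul_rpow hL (by positivity), ← rpow_mul (norm_nonneg _), div_mul_cancel₀ _ hq.ne']
  have hsum : Summable fun n => ‖x n‖ ^ q :=
    (hy.mul_left _).of_nonneg_of_le (fun _ => rpow_nonneg (norm_nonneg _) _) hpow
  refine ⟨hsum, ?_⟩
  have htsum : ∑' n, ‖x n‖ ^ q ≤ L ^ q * ∑' n, ‖y n‖ ^ p := by
    rw [← tsum_mul_left]
    exact hsum.tsum_le_tsum hpow (hy.mul_left _)
  have hY : 0 ≤ ∑' n, ‖y n‖ ^ p := tsum_nonneg fun _ => rpow_nonneg (norm_nonneg _) _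
  calc lpNorm q x ≤ (L ^ q * ∑' n, ‖y n‖ ^ p) ^ (1 / q) := by unfold lpNorm; gcongr
    _ = L * lpNorm p y ^ (p / q) := by
      rw [mul_rpow (by positivity) hY, one_div, rpow_rpow_inv hL hq.ne', lpNorm,
        ← rpow_mul hY, one_div_mul_eq_div, div_div_cancel_left' hp.ne', ← one_div]

end SequenceNorms

theorem stmt18_general {E : Type*} [NormedAddCommGroup E]
    (p q δ L : ℝ) (hp : 1 ≤ p) (hq : 1 ≤ q) (hδ : 0 < δ) (hL : 0 ≤ L) (f : E → E)
    (hf : ∀ u w : E, ‖u - w‖ ≤ δ → ‖f u - f w‖ ≤ L * ‖u - w‖ ^ (p / q)) :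
    ∀ ε > (0 : ℝ), ∃ η > (0 : ℝ), ∀ x y : ℕ → E,
      (Summable fun n : ℕ => ‖x n‖ ^ p) → (Summable fun n : ℕ => ‖y n‖ ^ p) →
      lpNorm p (fun n => x n - y n) ≤ η →
      bvNorm q (fun n => f (x n) - f (y n)) ≤ ε := by
  intro ε hε
  have hp0 : 0 < p := zero_lt_one.trans_le hp
  have hq0 : 0 < q := zero_lt_one.trans_le hq
  obtain ⟨θ, hθ, hLθ⟩ : ∃ θ > 0, 3 * (L * θ) ≤ ε := by
    refine ⟨ε / (3 * (L + 1)), by positivity, ?_⟩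
    calc 3 * (L * (ε / (3 * (L + 1)))) = ε * (L / (L + 1)) := by field_simp
      _ ≤ ε := mul_le_of_le_one_right hε.le ((div_le_one (by positivity)).2 (by linarith))
  refine ⟨min δ (θ ^ (q / p)), by positivity, fun x y hx hy hxy => ?_⟩
  have hd := summable_norm_sub_rpow hp0 hx hy
  have hclose : ∀ n, ‖x n - y n‖ ≤ δ := fun n =>
    (norm_le_lpNorm hp0 hd n).trans (hxy.trans (min_le_left _ _))
  obtain ⟨hg, hgd⟩ := lpNorm_le_mul_lpNorm_rpow hp0 hq0 hL hd fun n => hf _ _ (hclose n)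
  have hdθ : lpNorm p (fun n => x n - y n) ^ (p / q) ≤ θ := by
    calc lpNorm p (fun n => x n - y n) ^ (p / q) ≤ (θ ^ (q / p)) ^ (p / q) := by
          gcongr
          · exact lpNorm_nonneg _ _
          · exact hxy.trans (min_le_right _ _)
      _ = θ := by rw [← rpow_mul hθ.le, div_mul_div_cancel₀ hp0.ne', div_self hq0.ne', rpow_one]
  calc bvNorm q (fun n => f (x n) - f (y n))
      ≤ 3 * lpNorm q (fun n => f (x n) - f (y n)) := bvNorm_le_three_mul_lpNorm hq hg
    _ ≤ 3 * (L * θ) := by gcongr; exact hgd.trans (by gcongr)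
    _ ≤ ε := hLθ

theorem stmt18 {E : Type*} [NormedAddCommGroup E]
    (p q δ L : ℝ) (hp : 1 ≤ p) (hq : 1 ≤ q) (hδ : 0 < δ) (hL : 0 ≤ L) (f : E → E)
    (hf : ∀ u w : E, ‖u - w‖ ≤ δ → ‖f u - f w‖ ≤ L * ‖u - w‖ ^ (p / q))
    (hmaps : ∀ x : ℕ → E, (Summable fun n : ℕ => ‖x n‖ ^ p) →
      Summable fun n : ℕ => ‖f (x (n + 1)) - f (x n)‖ ^ q) :
    ∀ ε > (0 : ℝ), ∃ η > (0 : ℝ), ∀ x y : ℕ → E,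
      (Summable fun n : ℕ => ‖x n‖ ^ p) → (Summable fun n : ℕ => ‖y n‖ ^ p) →
      lpNorm p (fun n => x n - y n) ≤ η →
      bvNorm q (fun n => f (x n) - f (y n)) ≤ ε :=
  stmt18_general p q δ L hp hq hδ hL f hf
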